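/- arXiv:2404.17840 — 3 statements merged into one kernel-verified Lean document; each statement's English description precedes it below -/
import Mathlib

section
/- In the free product G = H * ⟨t⟩ of a group H with an infinite cyclic group ⟨t⟩, for any nontrivial element w ∈ H, the subgroup of G generated by w, twt⁻¹, and t²wt⁻² is isomorphic to the free product C_n * C_n * C_n, where n ∈ {2,3,...,∞} is the order of w. -/
open Monoid

section Aux

open Monoid.CoprodI Subgroup


namespace ClosureConjAux

universe u

def Fam (H : Type u) : Bool → Type u
  | false => H
  | true => ULift (Multiplicative ℤ)

instance (H : Type u) [Group H] : ∀ b, Group (Fam H b)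
  | false => ‹Group H›
  | true => inferInstanceAs (Group (ULift (Multiplicative ℤ)))

noncomputable instance (H : Type u) [Group H] : ∀ b, DecidableEq (Fam H b) :=
  fun _ => Classical.decEq _

variable {H : Type u} [Group H]

/-- The letter `t^k` as an element of the indexed free product. -/
def ofT (H : Type u) [Group H] (k : ℤ) : CoprodI (Fam H) :=
  CoprodI.of (M := Fam H) (i := true) (ULift.up (Multiplicative.ofAdd k))

def ofF {H : Type u} [Group H] (v : H) : CoprodI (Fam H) :=
  CoprodI.of (M := Fam H) (i := false) v

lemma up_ofAdd_ne_one {k : ℤ} (hk : k ≠ 0) :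
    (ULift.up (Multiplicative.ofAdd k) : Fam H true) ≠ 1 := by
  intro h
  apply hk
  simpa using congrArg ULift.down h

lemma ofT_mul_ofT (a b : ℤ) : ofT H a * ofT H b = ofT H (a + b) := by
  have := (map_mul (CoprodI.of (M := Fam H) (i := true)) (ULift.up (Multiplicative.ofAdd a) : Fam H true) (ULift.up (Multiplicative.ofAdd b))).symm
  exact this.trans rfl

lemma ofT_zero : (ofT H 0 : CoprodI (Fam H)) = 1 := by
  rw [ofT]
  convert map_one (CoprodI.of (M := Fam H) (i := true))
  rfl

def Φ : Monoid.Coprod H (Multiplicative ℤ) →* CoprodI (Fam H) :=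
  Coprod.lift (CoprodI.of (M := Fam H) (i := false))
    ((CoprodI.of (M := Fam H) (i := true)).comp
      (MulEquiv.ulift.symm : Multiplicative ℤ ≃* ULift (Multiplicative ℤ)).toMonoidHom)

@[simp] lemma Φ_inl (x : H) : Φ (Coprod.inl x) = ofF x := rfl

@[simp] lemma Φ_inr (x : Multiplicative ℤ) :
    Φ (Coprod.inr x) = CoprodI.of (M := Fam H) (i := true) (ULift.up x) := by
  simp [Φ]; rfl

lemma word_ext {u v : Word (Fam H)} (h : u.toList = v.toList) : u = v := by
  cases u; cases v; cases h; rfl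

lemma toList_of_smul {i : Bool} (m : Fam H i) (hm : m ≠ 1) (u : Word (Fam H))
    (hu : u.fstIdx ≠ some i) :
    (CoprodI.of m • u).toList = ⟨i, m⟩ :: u.toList := by
  rw [Word.of_smul_def, Word.equivPair_eq_of_fstIdx_ne hu]
  simp [Word.rcons, hm, Word.cons]

lemma exists_tail {u : Word (Fam H)} {a : Σ b, Fam H b} {l : List (Σ b, Fam H b)}
    (h : u.toList = a :: l) :
    ∃ u₂ : Word (Fam H), u₂.toList = l ∧ u = CoprodI.of a.2 • u₂ := by
  have hne := u.ne_one
  have hch := u.chain_ne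
  rw [h] at hne hch
  rw [List.isChain_cons] at hch
  refine ⟨⟨l, fun x hx => hne x (List.mem_cons_of_mem _ hx), hch.2⟩, rfl, ?_⟩
  have ha1 : a.2 ≠ 1 := hne a List.mem_cons_self
  have hfst : Word.fstIdx (⟨l, fun x hx => hne x (List.mem_cons_of_mem _ hx), hch.2⟩ :
      Word (Fam H)) ≠ some a.1 := by
    rw [Word.fstIdx_ne_iff]
    intro x hx
    exact hch.1 x (by simpa using hx)
  rw [← Word.cons_eq_smul (m := a.2) (ls := _) (h1 := hfst) (h2 := ha1)]
  apply word_ext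
  simp [Word.cons, h]

lemma fstIdx_of_toList {u : Word (Fam H)} {a : Σ b, Fam H b} {l} (h : u.toList = a :: l) :
    u.fstIdx = some a.1 := by
  simp [Word.fstIdx, h]

/-- The ping-pong sets. -/
def X (w : H) (i : Fin 3) : Set (Word (Fam H)) :=
  { u | ∃ v : H, v ∈ zpowers w ∧ v ≠ 1 ∧ ∃ l : List (Σ b, Fam H b),
      u.toList = (if (i : ℕ) = 0 then [⟨false, v⟩]
        else [⟨true, ULift.up (Multiplicative.ofAdd (i : ℤ))⟩, ⟨false, v⟩]) ++ l }

/-- The core ping-pong computation. -/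
lemma pp_core (w : H) {i j : Fin 3} (hij : i ≠ j) {v : H} (hvz : v ∈ zpowers w)
    (hv : v ≠ 1) {u : Word (Fam H)} (hu : u ∈ X w j) :
    ((ofT H (i : ℤ) * ofF v * (ofT H (i : ℤ))⁻¹ : CoprodI (Fam H))) • u ∈ X w i := by
  obtain ⟨v', hv'z, hv'1, l, hl⟩ := hu
  have hijZ : (i : ℤ) ≠ (j : ℤ) := by
    exact_mod_cast fun h => hij (Fin.val_injective (by exact_mod_cast h))
  -- uniform tail decomposition
  obtain ⟨u₂, hu₂, hu₂eq⟩ : ∃ u₂ : Word (Fam H),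
      u₂.toList = ⟨false, v'⟩ :: l ∧ u = ofT H (j : ℤ) • u₂ := by
    by_cases hj : (j : ℕ) = 0
    · refine ⟨u, by simpa [hj] using hl, ?_⟩
      have h0 : ofT H ((j : ℕ) : ℤ) = (1 : CoprodI (Fam H)) := by
        rw [show ((j : ℕ) : ℤ) = 0 by exact_mod_cast hj]
        exact ofT_zero
      rw [h0, one_smul]
    · rw [if_neg hj] at hl
      obtain ⟨u₂, h2, he⟩ := exists_tail hl
      exact ⟨u₂, h2, he⟩
  subst hu₂eq
  have hk : (j : ℤ) - (i : ℤ) ≠ 0 := sub_ne_zero.mpr hijZ.symm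
  -- collapse the t-powers
  have hg : (ofT H (i : ℤ) * ofF v * (ofT H (i : ℤ))⁻¹ : CoprodI (Fam H)) * ofT H (j : ℤ) =
      ofT H (i : ℤ) * (ofF v * ofT H ((j : ℤ) - i)) := by
    have h' : ((ofT H (i : ℤ))⁻¹ : CoprodI (Fam H)) * ofT H (j : ℤ) = ofT H ((j : ℤ) - i) := by
      rw [inv_mul_eq_iff_eq_mul, ofT_mul_ofT]
      congr 1
      ring
    rw [mul_assoc, mul_assoc, h']
  rw [smul_smul, hg, mul_smul, mul_smul]
  -- step 1
  have h1 : (ofT H ((j : ℤ) - i) • u₂ : Word (Fam H)).toList =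
      ⟨true, ULift.up (Multiplicative.ofAdd ((j : ℤ) - i))⟩ :: ⟨false, v'⟩ :: l := by
    exact (toList_of_smul (i := true) (ULift.up (Multiplicative.ofAdd ((j : ℤ) - i))) (up_ofAdd_ne_one hk) u₂ (by rw [fstIdx_of_toList hu₂]; simp)).trans (by rw [hu₂])
  -- step 2
  have h2 : (ofF v • ofT H ((j : ℤ) - i) • u₂ : Word (Fam H)).toList =
      ⟨false, v⟩ :: ⟨true, ULift.up (Multiplicative.ofAdd ((j : ℤ) - i))⟩ :: ⟨false, v'⟩ :: l := by
    exact (toList_of_smul (i := false) (v : Fam H false) hv _ (by rw [fstIdx_of_toList h1]; simp)).trans (by rw [h1])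
  by_cases hi : (i : ℕ) = 0
  · have h0 : ofT H ((i : ℕ) : ℤ) = (1 : CoprodI (Fam H)) := by
      rw [show ((i : ℕ) : ℤ) = 0 by exact_mod_cast hi]
      exact ofT_zero
    rw [h0, one_smul]
    exact ⟨v, hvz, hv, _, by rw [h2, if_pos hi]; rfl⟩
  · have hiZ : (i : ℤ) ≠ 0 := by exact_mod_cast hi
    have h3 : (ofT H (i : ℤ) • ofF v • ofT H ((j : ℤ) - i) • u₂ : Word (Fam H)).toList =
        ⟨true, ULift.up (Multiplicative.ofAdd (i : ℤ))⟩ :: ⟨false, v⟩ ::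
          ⟨true, ULift.up (Multiplicative.ofAdd ((j : ℤ) - i))⟩ :: ⟨false, v'⟩ :: l := by
      exact (toList_of_smul (i := true) (ULift.up (Multiplicative.ofAdd (i : ℤ))) (up_ofAdd_ne_one hiZ) _ (by rw [fstIdx_of_toList h2]; simp)).trans (by rw [h2])
    exact ⟨v, hvz, hv, _, by rw [h3, if_neg hi]; rfl⟩


namespace ClosureConjAux2
open ClosureConjAux Pointwise

variable {H : Type u} [Group H]

lemma X_nonempty (w : H) (hw : w ≠ 1) (i : Fin 3) : (X w i).Nonempty := by
  classical
  refine ⟨?_, ?_⟩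
  · by_cases hi : (i : ℕ) = 0
    · exact Word.cons (i := false) w Word.empty (by simp [Word.fstIdx, Word.empty]) hw
    · exact Word.cons (i := true) (ULift.up (Multiplicative.ofAdd (i : ℤ)))
        (Word.cons (i := false) w Word.empty (by simp [Word.fstIdx, Word.empty]) hw)
        (by simp [Word.fstIdx, Word.cons]) (up_ofAdd_ne_one (by exact_mod_cast hi))
  · by_cases hi : (i : ℕ) = 0 <;>
      exact ⟨w, mem_zpowers w, hw, [], by simp [hi, Word.cons, Word.empty]⟩

lemma X_disjoint (w : H) : Pairwise (Function.onFun Disjoint (X w)) := by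
  intro i j hij
  rw [Function.onFun, Set.disjoint_left]
  rintro u ⟨v, hvz, hv1, l, hl⟩ ⟨v', hv'z, hv'1, l', hl'⟩
  rw [hl] at hl'
  by_cases hi : (i : ℕ) = 0 <;> by_cases hj : (j : ℕ) = 0
  · exact hij (Fin.val_injective (hi.trans hj.symm))
  · rw [if_pos hi, if_neg hj] at hl'
    have := congrArg (fun s => s.head?.map Sigma.fst) hl'
    simp at this
  · rw [if_neg hi, if_pos hj] at hl'
    have := congrArg (fun s => s.head?.map Sigma.fst) hl'
    simp at this
  · rw [if_neg hi, if_neg hj] at hl'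
    have h1 : (⟨true, ULift.up (Multiplicative.ofAdd ((i : ℕ) : ℤ))⟩ : Σ b, Fam H b) =
        ⟨true, ULift.up (Multiplicative.ofAdd ((j : ℕ) : ℤ))⟩ := by
      have := congrArg (fun s => s.head?) hl'
      simpa using this
    have h2 := eq_of_heq (Sigma.ext_iff.mp h1).2
    have h3 : ((i : ℕ) : ℤ) = ((j : ℕ) : ℤ) := by
      simpa using congrArg ULift.down h2
    exact hij (Fin.val_injective (by exact_mod_cast h3))

/-- The three conjugation maps. -/
noncomputable def fconj (w : H) (i : Fin 3) :
    ↥(zpowers w) →* Monoid.Coprod H (Multiplicative ℤ) :=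
  ((MulAut.conj ((Coprod.inr (Multiplicative.ofAdd (1 : ℤ)) :
      Monoid.Coprod H (Multiplicative ℤ)) ^ (i : ℕ))).toMonoidHom.comp Coprod.inl).comp
    (zpowers w).subtype

lemma fconj_apply (w : H) (i : Fin 3) (x : ↥(zpowers w)) :
    fconj w i x = (Coprod.inr (Multiplicative.ofAdd (1 : ℤ)) :
      Monoid.Coprod H (Multiplicative ℤ)) ^ (i : ℕ) * Coprod.inl (x : H) *
        ((Coprod.inr (Multiplicative.ofAdd (1 : ℤ)) :
      Monoid.Coprod H (Multiplicative ℤ)) ^ (i : ℕ))⁻¹ := rfl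

lemma Φ_t_pow (n : ℕ) :
    Φ ((Coprod.inr (Multiplicative.ofAdd (1 : ℤ)) :
      Monoid.Coprod H (Multiplicative ℤ)) ^ n) = ofT H (n : ℤ) := by
  induction n with
  | zero => rw [pow_zero, map_one, Nat.cast_zero, ofT_zero]
  | succ n ih =>
      rw [pow_succ, map_mul, ih, show Φ ((Coprod.inr (Multiplicative.ofAdd (1 : ℤ)) :
        Monoid.Coprod H (Multiplicative ℤ))) = ofT H 1 from Φ_inr _, ofT_mul_ofT]
      norm_num

lemma Φ_fconj (w : H) (i : Fin 3) (x : ↥(zpowers w)) :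
    Φ (fconj w i x) = ofT H (i : ℤ) * ofF (x : H) * (ofT H (i : ℤ))⁻¹ := by
  rw [fconj_apply, map_mul, map_mul, map_inv, Φ_t_pow, Φ_inl]

lemma lift_fconj_injective (w : H) (hw : w ≠ 1) :
    Function.Injective (CoprodI.lift (fun i : Fin 3 => fconj w i)) := by
  letI : MulAction (Monoid.Coprod H (Multiplicative ℤ)) (Word (Fam H)) :=
    MulAction.compHom _ Φ
  apply lift_injective_of_ping_pong _ ?_ (X w) (X_nonempty w hw) (X_disjoint w)
  · intro i j hij h hh
    rintro x ⟨u, hu, rfl⟩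
    show Φ (fconj w i h) • u ∈ X w i
    rw [Φ_fconj]
    exact pp_core w hij h.2 (fun hc => hh (Subtype.ext hc)) hu
  · left
    rw [Cardinal.mk_fin]
    norm_num

lemma range_lift (w : H) :
    (CoprodI.lift (fun i : Fin 3 => fconj w i)).range =
      Subgroup.closure
        (letI t : Monoid.Coprod H (Multiplicative ℤ) := Coprod.inr (Multiplicative.ofAdd 1)
         {Coprod.inl w, t * Coprod.inl w * t⁻¹, t ^ 2 * Coprod.inl w * t⁻¹ ^ 2}) := by
  set t : Monoid.Coprod H (Multiplicative ℤ) := Coprod.inr (Multiplicative.ofAdd 1) with ht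
  apply le_antisymm
  · apply CoprodI.lift_range_le
    intro i
    rintro x ⟨y, rfl⟩
    obtain ⟨k, hk⟩ := y.2
    have hk' : w ^ k = (y : H) := hk
    have hy : fconj w i y = (t ^ (i : ℕ) * Coprod.inl w * (t ^ (i : ℕ))⁻¹) ^ k := by
      rw [fconj_apply, ← hk', map_zpow, conj_zpow]
    rw [hy]
    apply zpow_mem
    apply Subgroup.subset_closure
    fin_cases i <;> simp [inv_pow]
  · rw [Subgroup.closure_le]
    intro x hx
    simp only [Set.mem_insert_iff, Set.mem_singleton_iff] at hx
    rcases hx with rfl | rfl | rfl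
    · exact ⟨CoprodI.of (i := (0 : Fin 3)) ⟨w, mem_zpowers w⟩, by
        rw [CoprodI.lift_of, fconj_apply]; simp⟩
    · exact ⟨CoprodI.of (i := (1 : Fin 3)) ⟨w, mem_zpowers w⟩, by
        rw [CoprodI.lift_of, fconj_apply]; simp [ht]⟩
    · exact ⟨CoprodI.of (i := (2 : Fin 3)) ⟨w, mem_zpowers w⟩, by
        rw [CoprodI.lift_of, fconj_apply]; simp [inv_pow, ht]⟩

end ClosureConjAux2
end ClosureConjAux


end Aux

open ClosureConjAux ClosureConjAux2 in
/-- In the free product `G = H * ⟨t⟩` with `⟨t⟩ ≅ ℤ`, for `w ∈ H` nontrivial, the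
subgroup generated by `w`, `twt⁻¹` and `t²wt⁻²` is isomorphic to the free product
`C_n * C_n * C_n`, where `C_n = ⟨w⟩` is cyclic of order `n = ord(w) ∈ {2,3,…,∞}`. -/
theorem closure_conjugates_iso_coprodI_cyclic (H : Type*) [Group H]
    (w : H) (hw : w ≠ 1) :
    letI G := Monoid.Coprod H (Multiplicative ℤ)
    letI t : G := Coprod.inr (Multiplicative.ofAdd 1)
    Nonempty
      ((Subgroup.closure
          {Coprod.inl w, t * Coprod.inl w * t⁻¹, t ^ 2 * Coprod.inl w * t⁻¹ ^ 2} :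
            Subgroup G) ≃*
        Monoid.CoprodI (fun _ : Fin 3 => (Subgroup.zpowers w : Subgroup H))) := by
  have hinj := lift_fconj_injective w hw
  have hrange := range_lift w
  exact ⟨(MulEquiv.subgroupCongr hrange.symm).trans
    (MonoidHom.ofInjective hinj).symm⟩
end

section
/- If a marked group (G,S) has the Rapid Decay property witnessed by polynomial P, meaning ‖f‖_op ≤ P(r)·‖f‖_2 for all f ∈ ℂG supported in the ball of radius r, then the return probabilities satisfy ρ(G,S)^{2n} ≤ P(n)²·p(2n) for all n ≥ 1. -/
set_option linter.unusedSectionVars false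
set_option maxHeartbeats 1000000

open Filter Topology

variable {G : Type*} [Group G]

/-- Word length of `g` with respect to the generating set `S`. -/
noncomputable def wordLength (S : Set G) (g : G) : ℕ :=
  sInf {n | ∃ l : List G, (∀ x ∈ l, x ∈ S) ∧ l.length = n ∧ l.prod = g}

/-- The `ℓ²`-norm of a finitely supported function on `G`. -/
noncomputable def l2Norm (f : G →₀ ℝ) : ℝ :=
  Real.sqrt (∑ x ∈ f.support, (f x) ^ 2)

/-- Convolution `(f ⋆ u)(x) = ∑_g f(g) u(g⁻¹ x)` of finitely supported functions. -/
noncomputable def conv (f u : G →₀ ℝ) : G →₀ ℝ :=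
  f.sum fun g a => a • Finsupp.mapDomain (fun x => g * x) u

/-- The norm of `f` as a (left-)convolution operator on `ℓ²(G)` (computed on the dense
subspace of finitely supported functions). -/
noncomputable def opNorm (f : G →₀ ℝ) : ℝ :=
  sSup {c | ∃ u : G →₀ ℝ, l2Norm u ≤ 1 ∧ c = l2Norm (conv f u)}

/-- `(G,S)` has the Rapid Decay property witnessed by the polynomial `P`:
`‖f‖_op ≤ P(r) ‖f‖₂` for every `f` supported in the ball of radius `r`. -/
def RapidDecayWith (S : Set G) (P : Polynomial ℝ) : Prop :=
  ∀ (r : ℕ) (f : G →₀ ℝ), (∀ x ∈ f.support, wordLength S x ≤ r) →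
    opNorm f ≤ P.eval (r : ℝ) * l2Norm f

/-- Return probability at time `n` of the simple random walk on `(G,S)`. -/
noncomputable def retProb (S : Finset G) (n : ℕ) : ℝ :=
  (Nat.card {w : Fin n → S // (List.ofFn (fun i => (w i : G))).prod = 1} : ℝ) /
    (S.card : ℝ) ^ n

/-- The spectral radius `ρ(G,S) = limsup_n p(n)^{1/n}`. -/
noncomputable def rwSpectralRadius (S : Finset G) : ℝ :=
  limsup (fun n : ℕ => retProb S n ^ ((n : ℝ)⁻¹)) atTop

theorem conv_eq_mul (f u : MonoidAlgebra ℝ G) : conv f.coeff u.coeff = (f * u).coeff := by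
  ext x
  rw [MonoidAlgebra.coeff_mul_apply_left, conv, Finsupp.sum_apply, Finsupp.sum, Finsupp.sum]
  refine Finset.sum_congr rfl fun g hg => ?_
  rw [Finsupp.smul_apply]
  have : x = g * (g⁻¹ * x) := by group
  rw [this, Finsupp.mapDomain_apply (mul_right_injective g)]
  simp [smul_eq_mul]
theorem l2Norm_nonneg (f : G →₀ ℝ) : 0 ≤ l2Norm f := Real.sqrt_nonneg _

theorem sq_l2Norm (f : G →₀ ℝ) : l2Norm f ^ 2 = ∑ x ∈ f.support, (f x) ^ 2 :=
  Real.sq_sqrt (Finset.sum_nonneg fun _ _ => sq_nonneg _)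

theorem l2Norm_eq_sqrt_sum (f : G →₀ ℝ) (T : Finset G) (h : f.support ⊆ T) :
    l2Norm f = Real.sqrt (∑ x ∈ T, (f x) ^ 2) := by
  rw [l2Norm, Finset.sum_subset h (fun x _ hx => by
    rw [Finsupp.notMem_support_iff.mp hx]; ring)]

theorem l2Norm_eq_norm (f : G →₀ ℝ) (T : Finset G) (h : f.support ⊆ T) :
    l2Norm f
      = ‖((WithLp.linearEquiv 2 ℝ (T → ℝ)).symm (fun x : T => f x) : EuclideanSpace ℝ T)‖ := by
  rw [l2Norm_eq_sqrt_sum f T h, EuclideanSpace.norm_eq]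
  rw [← Finset.sum_coe_sort T (fun x => f x ^ 2)]
  simp [Real.norm_eq_abs, sq_abs]

theorem l2Norm_sum_le {ι : Type*} (s : Finset ι) (F : ι → (G →₀ ℝ)) :
    l2Norm (∑ i ∈ s, F i) ≤ ∑ i ∈ s, l2Norm (F i) := by
  classical
  set T := s.biUnion fun i => (F i).support with hT
  have hsub : ∀ i ∈ s, (F i).support ⊆ T := fun i hi =>
    Finset.subset_biUnion_of_mem (fun i => (F i).support) hi
  have hsupp : (∑ i ∈ s, F i).support ⊆ T :=
    (Finsupp.support_finset_sum).trans (by rfl)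
  rw [l2Norm_eq_norm _ T hsupp]
  have : ((WithLp.linearEquiv 2 ℝ (T → ℝ)).symm (fun x : T => (∑ i ∈ s, F i) x)
        : EuclideanSpace ℝ T)
      = ∑ i ∈ s, ((WithLp.linearEquiv 2 ℝ (T → ℝ)).symm (fun x : T => F i x)
        : EuclideanSpace ℝ T) := by
    rw [← map_sum]
    congr 1
    funext x
    simp
  rw [this]
  refine (norm_sum_le _ _).trans ?_
  refine Finset.sum_le_sum fun i hi => ?_
  rw [← l2Norm_eq_norm _ T (hsub i hi)]

theorem l2Norm_smul (a : ℝ) (f : G →₀ ℝ) : l2Norm (a • f) = |a| * l2Norm f := by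
  by_cases ha : a = 0
  · simp [ha, l2Norm]
  · have hsupp : (a • f).support = f.support := by
      ext x; simp [Finsupp.mem_support_iff, ha, smul_eq_mul]
    rw [l2Norm, hsupp, l2Norm]
    have : ∑ x ∈ f.support, ((a • f) x) ^ 2 = a ^ 2 * ∑ x ∈ f.support, (f x) ^ 2 := by
      rw [Finset.mul_sum]; refine Finset.sum_congr rfl fun x _ => by
        simp [smul_eq_mul]; ring
    rw [this, Real.sqrt_mul (sq_nonneg a), Real.sqrt_sq_eq_abs]

theorem l2Norm_mapDomain (g : G) (u : G →₀ ℝ) :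
    l2Norm (Finsupp.mapDomain (fun x => g * x) u) = l2Norm u := by
  classical
  have hinj : Function.Injective (fun x => g * x) := mul_right_injective g
  rw [l2Norm, l2Norm, Finsupp.mapDomain_support_of_injective hinj,
    Finset.sum_image (fun a _ b _ h => hinj h)]
  refine congrArg _ (Finset.sum_congr rfl fun x _ => ?_)
  rw [Finsupp.mapDomain_apply hinj]

theorem l2Norm_eq_zero {f : G →₀ ℝ} (h : l2Norm f = 0) : f = 0 := by
  have := Real.sqrt_eq_zero (Finset.sum_nonneg fun _ _ => sq_nonneg _) |>.mp h
  ext x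
  by_cases hx : x ∈ f.support
  · have := (Finset.sum_eq_zero_iff_of_nonneg (fun i _ => sq_nonneg (f i))).mp this x hx
    exact pow_eq_zero_iff (n := 2) (by norm_num) |>.mp this
  · simpa using Finsupp.notMem_support_iff.mp hx

theorem l2Norm_conv_le_l1 (f u : G →₀ ℝ) :
    l2Norm (conv f u) ≤ (∑ g ∈ f.support, |f g|) * l2Norm u := by
  rw [conv, Finsupp.sum]
  refine (l2Norm_sum_le _ _).trans ?_
  rw [Finset.sum_mul]
  refine Finset.sum_le_sum fun g hg => ?_
  rw [l2Norm_smul, l2Norm_mapDomain]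

theorem conv_smul (f u : G →₀ ℝ) (c : ℝ) : conv f (c • u) = c • conv f u := by
  rw [conv, conv, Finsupp.smul_sum]
  refine Finset.sum_congr rfl fun g hg => ?_
  simp only []
  rw [Finsupp.mapDomain_smul, smul_comm]

theorem conv_zero (f : G →₀ ℝ) : conv f 0 = 0 := by
  rw [conv]
  simp [Finsupp.mapDomain_zero]

theorem opNorm_bddAbove (f : G →₀ ℝ) :
    BddAbove {c | ∃ u : G →₀ ℝ, l2Norm u ≤ 1 ∧ c = l2Norm (conv f u)} := by
  refine ⟨∑ g ∈ f.support, |f g|, fun c hc => ?_⟩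
  obtain ⟨u, hu, rfl⟩ := hc
  calc l2Norm (conv f u) ≤ (∑ g ∈ f.support, |f g|) * l2Norm u := l2Norm_conv_le_l1 f u
    _ ≤ (∑ g ∈ f.support, |f g|) * 1 :=
        mul_le_mul_of_nonneg_left hu (Finset.sum_nonneg fun _ _ => abs_nonneg _)
    _ = _ := mul_one _

theorem opNorm_nonneg (f : G →₀ ℝ) : 0 ≤ opNorm f := by
  refine le_csSup (opNorm_bddAbove f) ⟨0, ?_, ?_⟩
  · simp [l2Norm]
  · rw [conv_zero]; simp [l2Norm]

theorem l2Norm_conv_le (f u : G →₀ ℝ) : l2Norm (conv f u) ≤ opNorm f * l2Norm u := by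
  by_cases hu : l2Norm u = 0
  · have h0 : u = 0 := l2Norm_eq_zero hu
    subst h0
    rw [conv_zero]
    have : l2Norm (0 : G →₀ ℝ) = 0 := by simp [l2Norm]
    rw [this, mul_zero]
  · have hupos : 0 < l2Norm u := lt_of_le_of_ne (l2Norm_nonneg u) (Ne.symm hu)
    set v : G →₀ ℝ := (l2Norm u)⁻¹ • u with hv
    have hvnorm : l2Norm v = 1 := by
      rw [hv, l2Norm_smul, abs_of_pos (inv_pos.mpr hupos), inv_mul_cancel₀ hu]
    have hconv : conv f v = (l2Norm u)⁻¹ • conv f u := by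
      rw [hv, conv_smul]
    have hle : l2Norm (conv f v) ≤ opNorm f :=
      le_csSup (opNorm_bddAbove f) ⟨v, le_of_eq hvnorm, rfl⟩
    have : l2Norm (conv f v) = (l2Norm u)⁻¹ * l2Norm (conv f u) := by
      rw [hconv, l2Norm_smul, abs_of_pos (inv_pos.mpr hupos)]
    rw [this] at hle
    calc l2Norm (conv f u) = l2Norm u * ((l2Norm u)⁻¹ * l2Norm (conv f u)) := by
          field_simp
      _ ≤ l2Norm u * opNorm f := mul_le_mul_of_nonneg_left hle (le_of_lt hupos)
      _ = opNorm f * l2Norm u := mul_comm _ _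

theorem l2Norm_single_one : l2Norm (Finsupp.single (1 : G) (1 : ℝ)) = 1 := by
  rw [l2Norm, Finsupp.support_single_ne_zero _ (one_ne_zero)]
  simp

theorem le_opNorm (f : G →₀ ℝ) : l2Norm f ≤ opNorm f := by
  have h1 : conv f (Finsupp.single (1 : G) (1 : ℝ)) = f := by
    rw [conv]
    have : ∀ g : G, Finsupp.mapDomain (fun x => g * x) (Finsupp.single (1:G) (1:ℝ))
        = Finsupp.single g 1 := by
      intro g; rw [Finsupp.mapDomain_single, mul_one]
    simp only [this, Finsupp.smul_single, smul_eq_mul, mul_one]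
    exact Finsupp.sum_single f
  refine le_csSup (opNorm_bddAbove f) ⟨Finsupp.single 1 1, le_of_eq l2Norm_single_one, ?_⟩
  rw [h1]

noncomputable def muS (S : Finset G) : MonoidAlgebra ℝ G :=
  (S.card : ℝ)⁻¹ • ∑ s ∈ S, MonoidAlgebra.single s (1 : ℝ)

theorem mu_mul_apply (S : Finset G) (v : MonoidAlgebra ℝ G) (x : G) :
    (muS S * v).coeff x = (S.card : ℝ)⁻¹ * ∑ s ∈ S, v.coeff (s⁻¹ * x) := by
  rw [muS, smul_mul_assoc, Finset.sum_mul, MonoidAlgebra.coeff_smul, MonoidAlgebra.coeff_sum, Finsupp.smul_apply, Finsupp.finset_sum_apply]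
  simp only [MonoidAlgebra.coeff_single_mul_apply, one_mul, smul_eq_mul]

theorem mul_mu_apply (S : Finset G) (v : MonoidAlgebra ℝ G) (x : G) :
    (v * muS S).coeff x = (S.card : ℝ)⁻¹ * ∑ s ∈ S, v.coeff (x * s⁻¹) := by
  rw [muS, mul_smul_comm, Finset.mul_sum, MonoidAlgebra.coeff_smul, MonoidAlgebra.coeff_sum, Finsupp.smul_apply, Finsupp.finset_sum_apply]
  simp only [MonoidAlgebra.coeff_mul_single_apply, mul_one, smul_eq_mul]

theorem mu_pow_nonneg (S : Finset G) : ∀ (m : ℕ) (x : G), 0 ≤ (muS S ^ m).coeff x := by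
  classical
  intro m
  induction m with
  | zero =>
    intro x
    rw [pow_zero, MonoidAlgebra.one_def]
    rw [MonoidAlgebra.coeff_single, Finsupp.single_apply]
    split <;> norm_num
  | succ m ih =>
    intro x
    rw [pow_succ', mu_mul_apply]
    exact mul_nonneg (by positivity) (Finset.sum_nonneg fun s _ => ih _)

theorem mu_pow_symm (S : Finset G) (hsym : ∀ s ∈ S, s⁻¹ ∈ S) :
    ∀ (m : ℕ) (x : G), (muS S ^ m).coeff x⁻¹ = (muS S ^ m).coeff x := by
  classical
  intro m
  induction m with
  | zero =>
    intro x
    rw [pow_zero, MonoidAlgebra.one_def]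
    rw [MonoidAlgebra.coeff_single, Finsupp.single_apply, Finsupp.single_apply]
    by_cases hx : x = 1 <;> simp [hx, eq_comm, inv_eq_one]
  | succ m ih =>
    intro x
    calc (muS S ^ (m+1)).coeff x⁻¹ = (muS S * muS S ^ m).coeff x⁻¹ := by rw [← pow_succ']
      _ = (S.card : ℝ)⁻¹ * ∑ s ∈ S, (muS S ^ m).coeff (s⁻¹ * x⁻¹) := mu_mul_apply ..
      _ = (S.card : ℝ)⁻¹ * ∑ s ∈ S, (muS S ^ m).coeff (x * s) := by
          congr 1
          refine Finset.sum_congr rfl fun s _ => ?_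
          rw [← mul_inv_rev, ih]
      _ = (S.card : ℝ)⁻¹ * ∑ s ∈ S, (muS S ^ m).coeff (x * s⁻¹) := by
          congr 1
          refine Finset.sum_nbij' (fun s => s⁻¹) (fun s => s⁻¹) ?_ ?_ ?_ ?_ ?_ <;>
            simp +contextual [hsym]
      _ = (muS S ^ m * muS S).coeff x := (mul_mu_apply ..).symm
      _ = (muS S ^ (m+1)).coeff x := by rw [← pow_succ]

theorem mu_pow_mass (S : Finset G) (hS : S.Nonempty) (m : ℕ) :
    ((muS S ^ m).coeff.sum fun _ a => a) = 1 := by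
  have hcard : (S.card : ℝ) ≠ 0 := Nat.cast_ne_zero.mpr (Finset.card_ne_zero_of_mem hS.choose_spec)
  set φ := (MonoidAlgebra.lift ℝ ℝ G) 1 with hφdef
  have hφ : ∀ f : MonoidAlgebra ℝ G, φ f = f.coeff.sum fun _ b => b := by
    intro f
    rw [hφdef, MonoidAlgebra.lift_apply]
    simp
  have hμ : φ (muS S) = 1 := by
    rw [hφdef, muS, map_smul, map_sum]
    have : ∀ s ∈ S, (MonoidAlgebra.lift ℝ ℝ G) 1 (MonoidAlgebra.single s (1:ℝ)) = 1 := by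
      intro s _
      rw [MonoidAlgebra.lift_single]
      simp
    rw [Finset.sum_congr rfl this]
    simp [hcard]
  rw [← hφ, map_pow, hμ, one_pow]

theorem mu_pow_apply_le_one (S : Finset G) (hS : S.Nonempty) (m : ℕ) (x : G) :
    (muS S ^ m).coeff x ≤ 1 := by
  by_cases hx : x ∈ (muS S ^ m).coeff.support
  · calc (muS S ^ m).coeff x ≤ ∑ y ∈ (muS S ^ m).coeff.support, (muS S ^ m).coeff y :=
        Finset.single_le_sum (fun y _ => mu_pow_nonneg S m y) hx
      _ = 1 := mu_pow_mass S hS m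
  · rw [Finsupp.notMem_support_iff.mp hx]; norm_num

theorem l2Norm_mu_pow_le_one (S : Finset G) (hS : S.Nonempty) (m : ℕ) :
    l2Norm (muS S ^ m).coeff ≤ 1 := by
  rw [l2Norm]
  refine Real.sqrt_le_one.mpr ?_
  calc ∑ x ∈ (muS S ^ m).coeff.support, ((muS S ^ m).coeff x) ^ 2
      ≤ ∑ x ∈ (muS S ^ m).coeff.support, (muS S ^ m).coeff x := by
        refine Finset.sum_le_sum fun x _ => ?_
        rw [sq]
        calc (muS S ^ m).coeff x * (muS S ^ m).coeff x ≤ 1 * (muS S ^ m).coeff x :=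
            mul_le_mul_of_nonneg_right (mu_pow_apply_le_one S hS m x) (mu_pow_nonneg S m x)
          _ = (muS S ^ m).coeff x := one_mul _
    _ = 1 := mu_pow_mass S hS m

theorem mu_pow_word (S : Finset G) :
    ∀ (m : ℕ) (x : G), (muS S ^ m).coeff x ≠ 0 →
      ∃ l : List G, (∀ y ∈ l, y ∈ (S : Set G)) ∧ l.length = m ∧ l.prod = x := by
  classical
  intro m
  induction m with
  | zero =>
    intro x hx
    rw [pow_zero, MonoidAlgebra.one_def, MonoidAlgebra.coeff_single, Finsupp.single_apply] at hx
    have : x = 1 := by by_contra h; simp [Ne.symm h] at hx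
    exact ⟨[], by simp, by simp, by simp [this]⟩
  | succ m ih =>
    intro x hx
    rw [pow_succ', mu_mul_apply] at hx
    have hsum : ∑ s ∈ S, (muS S ^ m).coeff (s⁻¹ * x) ≠ 0 := by
      intro h; rw [h, mul_zero] at hx; exact hx rfl
    obtain ⟨s, hs, hne⟩ := Finset.exists_ne_zero_of_sum_ne_zero hsum
    obtain ⟨l, hl1, hl2, hl3⟩ := ih _ hne
    refine ⟨s :: l, ?_, by simp [hl2], by simp [hl3]⟩
    intro y hy
    rcases List.mem_cons.mp hy with h | h
    · subst h; exact Finset.mem_coe.mpr hs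
    · exact hl1 y h

def consEquiv (S : Finset G) (m : ℕ) (x : G) :
    {w : Fin (m+1) → S // (List.ofFn (fun i => (w i : G))).prod = x} ≃
      Σ s : S, {w : Fin m → S // (List.ofFn (fun i => (w i : G))).prod = (s : G)⁻¹ * x} where
  toFun w := ⟨w.1 0, fun i => w.1 i.succ, by
    have h := w.2
    rw [List.ofFn_succ, List.prod_cons] at h
    exact eq_inv_mul_iff_mul_eq.mpr h⟩
  invFun p := ⟨Fin.cons p.1 p.2.1, by
    rw [List.ofFn_succ, List.prod_cons]
    simp only [Fin.cons_zero, Fin.cons_succ]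
    rw [p.2.2, mul_inv_cancel_left]⟩
  left_inv w := Subtype.ext (funext fun i => by
    refine Fin.cases ?_ ?_ i
    · simp
    · intro j; simp)
  right_inv p := by
    obtain ⟨s, w, hw⟩ := p
    refine Sigma.ext ?_ ?_
    · simp
    · refine heq_of_eq (Subtype.ext (funext fun i => ?_))
      simp

theorem card_succ (S : Finset G) (m : ℕ) (x : G) :
    Nat.card {w : Fin (m+1) → S // (List.ofFn (fun i => (w i : G))).prod = x}
      = ∑ s ∈ S, Nat.card {w : Fin m → S // (List.ofFn (fun i => (w i : G))).prod = s⁻¹ * x} := by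
  classical
  rw [Nat.card_congr (consEquiv S m x), Nat.card_eq_fintype_card, Fintype.card_sigma]
  rw [← Finset.sum_coe_sort S
    (fun s => Nat.card {w : Fin m → S // (List.ofFn (fun i => (w i : G))).prod = s⁻¹ * x})]
  exact Finset.sum_congr rfl fun s _ => (Nat.card_eq_fintype_card).symm

theorem mu_pow_apply_eq (S : Finset G) (hS : S.Nonempty) :
    ∀ (m : ℕ) (x : G), (muS S ^ m).coeff x
      = (Nat.card {w : Fin m → S // (List.ofFn (fun i => (w i : G))).prod = x} : ℝ)
        / (S.card : ℝ) ^ m := by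
  classical
  have hcard : (0:ℝ) < (S.card : ℝ) := by
    exact_mod_cast Finset.card_pos.mpr hS
  intro m
  induction m with
  | zero =>
    intro x
    rw [pow_zero, pow_zero, MonoidAlgebra.one_def, MonoidAlgebra.coeff_single, Finsupp.single_apply]
    by_cases hx : x = 1
    · subst hx
      haveI : Unique {w : Fin 0 → S // (List.ofFn (fun i => (w i : G))).prod = 1} :=
        ⟨⟨⟨fun i => i.elim0, by simp⟩⟩, fun w => Subtype.ext (funext fun i => i.elim0)⟩
      rw [Nat.card_unique]
      simp
    · haveI : IsEmpty {w : Fin 0 → S // (List.ofFn (fun i => (w i : G))).prod = x} :=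
        ⟨fun w => hx (by simpa using w.2.symm)⟩
      rw [Nat.card_of_isEmpty]
      simp [Ne.symm hx]
  | succ m ih =>
    intro x
    rw [pow_succ', mu_mul_apply, card_succ]
    push_cast
    rw [Finset.sum_div]
    rw [Finset.mul_sum]
    rw [pow_succ]
    refine Finset.sum_congr rfl fun s hs => ?_
    rw [ih (s⁻¹ * x)]
    ring

theorem retProb_eq (S : Finset G) (hS : S.Nonempty) (m : ℕ) :
    retProb S m = (muS S ^ m).coeff 1 := by
  rw [mu_pow_apply_eq S hS m 1, retProb]

theorem mul_apply_one' (f g : MonoidAlgebra ℝ G) :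
    (f * g).coeff 1 = ∑ a ∈ f.coeff.support, f.coeff a * g.coeff a⁻¹ := by
  rw [MonoidAlgebra.coeff_mul_apply_left, Finsupp.sum]
  exact Finset.sum_congr rfl fun a _ => by rw [mul_one, mul_comm]

theorem retProb_nonneg (S : Finset G) (hS : S.Nonempty) (m : ℕ) : 0 ≤ retProb S m := by
  rw [retProb_eq S hS]; exact mu_pow_nonneg S m 1

theorem retProb_le_one (S : Finset G) (hS : S.Nonempty) (m : ℕ) : retProb S m ≤ 1 := by
  rw [retProb_eq S hS]; exact mu_pow_apply_le_one S hS m 1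

theorem retProb_zero (S : Finset G) (hS : S.Nonempty) : retProb S 0 = 1 := by
  rw [retProb_eq S hS, pow_zero, MonoidAlgebra.one_def]
  simp

theorem retProb_supermul (S : Finset G) (hS : S.Nonempty) (a b : ℕ) :
    retProb S a * retProb S b ≤ retProb S (a + b) := by
  rw [retProb_eq S hS, retProb_eq S hS, retProb_eq S hS, pow_add, mul_apply_one']
  by_cases h1 : (1:G) ∈ (muS S ^ a).coeff.support
  · have := Finset.single_le_sum
      (f := fun g => (muS S ^ a).coeff g * (muS S ^ b).coeff g⁻¹)
      (fun g _ => mul_nonneg (mu_pow_nonneg S a g) (mu_pow_nonneg S b g⁻¹)) h1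
    simpa using this
  · rw [Finsupp.notMem_support_iff.mp h1, zero_mul]
    exact Finset.sum_nonneg fun g _ =>
      mul_nonneg (mu_pow_nonneg S a g) (mu_pow_nonneg S b g⁻¹)

theorem retProb_two_mul (S : Finset G) (hS : S.Nonempty) (hsym : ∀ s ∈ S, s⁻¹ ∈ S) (m : ℕ) :
    retProb S (2 * m) = l2Norm (muS S ^ m).coeff ^ 2 := by
  rw [retProb_eq S hS, two_mul, pow_add, mul_apply_one', sq_l2Norm]
  exact Finset.sum_congr rfl fun a _ => by rw [mu_pow_symm S hsym, sq]

theorem retProb_two_pos (S : Finset G) (hS : S.Nonempty) (hsym : ∀ s ∈ S, s⁻¹ ∈ S) :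
    0 < retProb S 2 := by
  classical
  obtain ⟨s, hs⟩ := hS
  have hcard : (0:ℝ) < (S.card : ℝ) := by exact_mod_cast Finset.card_pos.mpr ⟨s, hs⟩
  have hmu_s : (muS S).coeff s = (S.card : ℝ)⁻¹ := by
    rw [muS, MonoidAlgebra.coeff_smul, MonoidAlgebra.coeff_sum, Finsupp.smul_apply, Finsupp.finset_sum_apply]
    simp only [MonoidAlgebra.coeff_single]
    have : ∑ t ∈ S, (Finsupp.single t (1:ℝ)) s = 1 := by
      rw [Finset.sum_congr rfl fun t _ => Finsupp.single_apply]
      rw [Finset.sum_ite_eq' S s (fun _ => (1:ℝ))]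
      simp [hs]
    rw [this]
    simp
  have hsupp : s ∈ (muS S).coeff.support := by
    rw [Finsupp.mem_support_iff, hmu_s]
    positivity
  have h2 : retProb S 2 = ∑ a ∈ (muS S).coeff.support, (muS S).coeff a * (muS S).coeff a⁻¹ := by
    have : retProb S 2 = (muS S ^ 1 * muS S ^ 1).coeff 1 := by
      rw [retProb_eq S ⟨s, hs⟩, ← pow_add]
    rw [this, pow_one, mul_apply_one']
  rw [h2]
  have hterm : (0:ℝ) < (muS S).coeff s * (muS S).coeff s⁻¹ := by
    have : (muS S).coeff s⁻¹ = (muS S).coeff s := by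
      have := mu_pow_symm S hsym 1 s
      simpa [pow_one] using this
    rw [this, hmu_s]
    positivity
  calc (0:ℝ) < (muS S).coeff s * (muS S).coeff s⁻¹ := hterm
    _ ≤ ∑ a ∈ (muS S).coeff.support, (muS S).coeff a * (muS S).coeff a⁻¹ :=
      Finset.single_le_sum (f := fun a => (muS S).coeff a * (muS S).coeff a⁻¹)
        (fun a _ => mul_nonneg (by simpa [pow_one] using mu_pow_nonneg S 1 a)
          (by simpa [pow_one] using mu_pow_nonneg S 1 a⁻¹)) hsupp

theorem retProb_two_pow_le (S : Finset G) (hS : S.Nonempty) (m : ℕ) :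
    retProb S 2 ^ m ≤ retProb S (2 * m) := by
  induction m with
  | zero => simp [retProb_zero S hS]
  | succ m ih =>
    have h1 : retProb S (2*m) * retProb S 2 ≤ retProb S (2*m + 2) := retProb_supermul S hS _ _
    have h2 : retProb S 2 ^ m * retProb S 2 ≤ retProb S (2*m) * retProb S 2 :=
      mul_le_mul_of_nonneg_right ih (retProb_nonneg S hS 2)
    calc retProb S 2 ^ (m+1) = retProb S 2 ^ m * retProb S 2 := pow_succ _ _
      _ ≤ retProb S (2*m) * retProb S 2 := h2
      _ ≤ retProb S (2*m + 2) := h1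
      _ = retProb S (2*(m+1)) := by ring_nf

theorem l2Norm_mu_pow_mul_le (S : Finset G) (n : ℕ) :
    ∀ k : ℕ, l2Norm (muS S ^ ((k+1)*n)).coeff ≤ opNorm (muS S ^ n).coeff ^ k * l2Norm (muS S ^ n).coeff := by
  intro k
  induction k with
  | zero => simp
  | succ k ih =>
    have hsplit : (k+2)*n = n + (k+1)*n := by ring
    have hmul : (muS S ^ ((k+2)*n)).coeff = conv (muS S ^ n).coeff (muS S ^ ((k+1)*n)).coeff := by
      rw [conv_eq_mul, hsplit, pow_add]
    calc l2Norm (muS S ^ ((k+2)*n)).coeff = l2Norm (conv (muS S ^ n).coeff (muS S ^ ((k+1)*n)).coeff) := by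
          rw [hmul]
      _ ≤ opNorm (muS S ^ n).coeff * l2Norm (muS S ^ ((k+1)*n)).coeff := l2Norm_conv_le _ _
      _ ≤ opNorm (muS S ^ n).coeff * (opNorm (muS S ^ n).coeff ^ k * l2Norm (muS S ^ n).coeff) :=
          mul_le_mul_of_nonneg_left ih (opNorm_nonneg _)
      _ = opNorm (muS S ^ n).coeff ^ (k+1) * l2Norm (muS S ^ n).coeff := by ring

/-- Chatterji–Pittet–Saloff-Coste: Rapid Decay implies
`ρ(G,S)^{2n} ≤ P(n)² · p(2n)`. -/
theorem rd_implies_return_prob_lower_bound (S : Finset G) (hS : S.Nonempty)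
    (hsym : ∀ s ∈ S, s⁻¹ ∈ S) (hgen : Subgroup.closure (S : Set G) = ⊤)
    (P : Polynomial ℝ) (hRD : RapidDecayWith (S : Set G) P) :
    ∀ n : ℕ, 1 ≤ n →
      rwSpectralRadius S ^ (2 * n) ≤ (P.eval (n : ℝ)) ^ 2 * retProb S (2 * n) := by
  intro n hn
  set f : G →₀ ℝ := (muS S ^ n).coeff with hf
  set p2n : ℝ := retProb S (2 * n) with hp2n_def
  -- RD applies to f
  have hf_supp : ∀ x ∈ f.support, wordLength (S : Set G) x ≤ n := by
    intro x hx
    obtain ⟨l, h1, h2, h3⟩ := mu_pow_word S n x (Finsupp.mem_support_iff.mp hx)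
    exact Nat.sInf_le ⟨l, h1, h2, h3⟩
  have hRDn : opNorm f ≤ P.eval (n : ℝ) * l2Norm f := hRD n f hf_supp
  have hl2sq : l2Norm f ^ 2 = p2n := (retProb_two_mul S hS hsym n).symm
  have hp2 : 0 < retProb S 2 := retProb_two_pos S hS hsym
  have hp2le1 : retProb S 2 ≤ 1 := retProb_le_one S hS 2
  have hp2n_pos : 0 < p2n := lt_of_lt_of_le (pow_pos hp2 n) (retProb_two_pow_le S hS n)
  have hl2_nonneg : 0 ≤ l2Norm f := l2Norm_nonneg f
  have hl2pos : 0 < l2Norm f := by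
    rcases lt_or_eq_of_le hl2_nonneg with h | h
    · exact h
    · exfalso; rw [← h] at hl2sq; simp at hl2sq; linarith
  have hPn1 : 1 ≤ P.eval (n : ℝ) := by
    have h1 : l2Norm f ≤ P.eval (n : ℝ) * l2Norm f := (le_opNorm f).trans hRDn
    nlinarith
  set D : ℝ := P.eval (n : ℝ) ^ 2 * p2n with hD_def
  have hD_pos : 0 < D := mul_pos (pow_pos (lt_of_lt_of_le one_pos hPn1) 2) hp2n_pos
  have hp2n_le_D : p2n ≤ D := by
    have h1 : 1 ≤ P.eval (n : ℝ) ^ 2 := one_le_pow₀ hPn1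
    nlinarith
  -- basic properties of the sequence
  set a : ℕ → ℝ := fun j => retProb S j ^ ((j : ℝ)⁻¹) with ha_def
  have ha_nonneg : ∀ j, 0 ≤ a j := fun j => Real.rpow_nonneg (retProb_nonneg S hS j) _
  have ha_le_one : ∀ j, a j ≤ 1 := fun j =>
    Real.rpow_le_one (retProb_nonneg S hS j) (retProb_le_one S hS j) (by positivity)
  have hbdd : IsBoundedUnder (· ≤ ·) atTop a := Filter.isBoundedUnder_of ⟨1, ha_le_one⟩
  have hcobdd : IsCoboundedUnder (· ≤ ·) atTop a :=
    Filter.isCoboundedUnder_le_of_le atTop ha_nonneg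
  have hρ_eq : rwSpectralRadius S = limsup a atTop := rfl
  have hρ_nonneg : 0 ≤ rwSpectralRadius S := by
    rw [hρ_eq]
    exact le_limsup_of_frequently_le (Frequently.of_forall ha_nonneg) hbdd
  by_cases hD1 : 1 ≤ D
  · have hρ1 : rwSpectralRadius S ≤ 1 := by
      rw [hρ_eq]
      exact limsup_le_of_le hcobdd (Eventually.of_forall ha_le_one)
    calc rwSpectralRadius S ^ (2*n) ≤ 1 ^ (2*n) := pow_le_pow_left₀ hρ_nonneg hρ1 _
      _ = 1 := one_pow _
      _ ≤ D := hD1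
  · push_neg at hD1
    -- key iteration bound
    have hkey : ∀ k : ℕ, retProb S (2 * ((k+1) * n)) ≤ D ^ (k+1) := by
      intro k
      have h1 : l2Norm (muS S ^ ((k+1)*n)).coeff ≤ opNorm f ^ k * l2Norm f :=
        l2Norm_mu_pow_mul_le S n k
      have h2 : opNorm f ^ k * l2Norm f ≤ (P.eval (n:ℝ) * l2Norm f) ^ k * l2Norm f := by
        refine mul_le_mul_of_nonneg_right (pow_le_pow_left₀ (opNorm_nonneg f) hRDn k) hl2_nonneg
      have h3 : retProb S (2 * ((k+1)*n)) = l2Norm (muS S ^ ((k+1)*n)).coeff ^ 2 :=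
        retProb_two_mul S hS hsym _
      have h4 : l2Norm (muS S ^ ((k+1)*n)).coeff ^ 2 ≤ ((P.eval (n:ℝ) * l2Norm f) ^ k * l2Norm f)^2 := by
        refine pow_le_pow_left₀ (l2Norm_nonneg _) (h1.trans h2) 2
      have h5 : ((P.eval (n:ℝ) * l2Norm f) ^ k * l2Norm f)^2 = D ^ k * p2n := by
        rw [hD_def, ← hl2sq]; ring
      rw [h3]
      refine h4.trans ?_
      rw [h5, pow_succ]
      exact mul_le_mul_of_nonneg_left hp2n_le_D (pow_nonneg hD_pos.le k)
    set E : ℝ := (retProb S 2 ^ n)⁻¹ with hE_def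
    have hE_pos : 0 < E := by positivity
    set c : ℝ := D ^ ((2 * (n:ℝ))⁻¹) with hc_def
    set g : ℕ → ℝ := fun j => c * E ^ ((2 * (j:ℝ))⁻¹) with hg_def
    -- eventual bound a j ≤ g j
    have h_ev : ∀ j : ℕ, 1 ≤ j → a j ≤ g j := by
      intro j hj
      have hjR : (0:ℝ) < (j:ℝ) := by exact_mod_cast hj
      set K : ℕ := j / n + 1 with hK_def
      have hnpos : 0 < n := lt_of_lt_of_le one_pos hn
      have hdm := Nat.div_add_mod j n
      have hmlt : j % n < n := Nat.mod_lt j hnpos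
      have hjK : j ≤ K * n := by
        have : j ≤ n * (j / n) + n := by omega
        calc j ≤ n * (j / n) + n := this
          _ = K * n := by rw [hK_def]; ring
      have hKj : K * n ≤ j + n := by
        have h2 := Nat.div_mul_le_self j n
        calc K * n = j / n * n + n := by rw [hK_def]; ring
          _ ≤ j + n := by omega
      set s : ℕ := K * n - j with hs_def
      have hsn : s ≤ n := by omega
      have hKn_eq : K * n = j + s := by omega
      -- p(2j) ≤ D^K / p2^n
      have hsup : retProb S (2*j) * retProb S (2*s) ≤ retProb S (2*(K*n)) := by
        rw [hKn_eq]
        have : 2 * (j + s) = 2*j + 2*s := by ring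
        rw [this]
        exact retProb_supermul S hS _ _
      have hp2s : retProb S 2 ^ n ≤ retProb S (2*s) := by
        calc retProb S 2 ^ n ≤ retProb S 2 ^ s := pow_le_pow_of_le_one hp2.le hp2le1 hsn
          _ ≤ retProb S (2*s) := retProb_two_pow_le S hS s
      have hKform : retProb S (2*(K*n)) ≤ D ^ K := by
        have := hkey (j / n)
        rwa [← hK_def] at this
      have hmain : retProb S (2*j) * retProb S 2 ^ n ≤ D ^ K := by
        calc retProb S (2*j) * retProb S 2 ^ n ≤ retProb S (2*j) * retProb S (2*s) :=
              mul_le_mul_of_nonneg_left hp2s (retProb_nonneg S hS _)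
          _ ≤ retProb S (2*(K*n)) := hsup
          _ ≤ D ^ K := hKform
      have hp2j_le : retProb S (2*j) ≤ D ^ K * E := by
        rw [hE_def]
        rw [le_mul_inv_iff₀ (by positivity)]
        exact hmain
      -- a j ≤ p(2j)^(1/(2j))
      have hsq : retProb S j ^ 2 ≤ retProb S (2*j) := by
        have := retProb_supermul S hS j j
        rw [← two_mul] at this
        calc retProb S j ^ 2 = retProb S j * retProb S j := sq _
          _ ≤ retProb S (2*j) := this
      have hstep1 : a j ≤ retProb S (2*j) ^ ((2 * (j:ℝ))⁻¹) := by
        have h6 : retProb S j ≤ retProb S (2*j) ^ ((2:ℝ)⁻¹) := by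
          have : ((2:ℝ))⁻¹ = 1/2 := by norm_num
          rw [this, ← Real.sqrt_eq_rpow]
          rw [Real.le_sqrt (retProb_nonneg S hS j) (retProb_nonneg S hS (2*j))]
          exact hsq
        calc a j ≤ (retProb S (2*j) ^ ((2:ℝ)⁻¹)) ^ ((j:ℝ)⁻¹) :=
              Real.rpow_le_rpow (retProb_nonneg S hS j) h6 (by positivity)
          _ = retProb S (2*j) ^ ((2:ℝ)⁻¹ * (j:ℝ)⁻¹) := by
              rw [← Real.rpow_mul (retProb_nonneg S hS _)]
          _ = retProb S (2*j) ^ ((2 * (j:ℝ))⁻¹) := by rw [mul_inv]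
      have hstep2 : retProb S (2*j) ^ ((2 * (j:ℝ))⁻¹) ≤ (D ^ K * E) ^ ((2 * (j:ℝ))⁻¹) :=
        Real.rpow_le_rpow (retProb_nonneg S hS _) hp2j_le (by positivity)
      have hstep3 : (D ^ K * E) ^ ((2 * (j:ℝ))⁻¹)
          = (D ^ K) ^ ((2 * (j:ℝ))⁻¹) * E ^ ((2 * (j:ℝ))⁻¹) :=
        Real.mul_rpow (by positivity) hE_pos.le
      have hstep4 : (D ^ K : ℝ) ^ ((2 * (j:ℝ))⁻¹) ≤ c := by
        rw [← Real.rpow_natCast D K, ← Real.rpow_mul hD_pos.le, hc_def]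
        refine Real.rpow_le_rpow_of_exponent_ge hD_pos hD1.le ?_
        have hjKR : (j:ℝ) ≤ (K:ℝ) * (n:ℝ) := by exact_mod_cast hjK
        have hnR : (0:ℝ) < (n:ℝ) := by exact_mod_cast lt_of_lt_of_le one_pos hn
        have h2j : (0:ℝ) < 2*(j:ℝ) := by positivity
        have h2n : (0:ℝ) < 2*(n:ℝ) := by positivity
        rw [inv_eq_one_div, ← div_eq_mul_inv, div_le_div_iff₀ h2n h2j]
        nlinarith
      calc a j ≤ retProb S (2*j) ^ ((2 * (j:ℝ))⁻¹) := hstep1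
        _ ≤ (D ^ K * E) ^ ((2 * (j:ℝ))⁻¹) := hstep2
        _ = (D ^ K) ^ ((2 * (j:ℝ))⁻¹) * E ^ ((2 * (j:ℝ))⁻¹) := hstep3
        _ ≤ c * E ^ ((2 * (j:ℝ))⁻¹) :=
            mul_le_mul_of_nonneg_right hstep4 (Real.rpow_nonneg hE_pos.le _)
        _ = g j := rfl
    -- limit of g
    have hexp : Tendsto (fun j : ℕ => (2 * (j:ℝ))⁻¹) atTop (𝓝 0) := by
      refine Tendsto.inv_tendsto_atTop ?_
      exact Tendsto.const_mul_atTop two_pos tendsto_natCast_atTop_atTop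
    have hEfac : Tendsto (fun j : ℕ => E ^ ((2 * (j:ℝ))⁻¹)) atTop (𝓝 1) := by
      have := Filter.Tendsto.rpow (tendsto_const_nhds (x := E) (f := atTop (α := ℕ)))
        hexp (Or.inl hE_pos.ne')
      simpa using this
    have hg_tendsto : Tendsto g atTop (𝓝 c) := by
      have h := hEfac.const_mul c
      rw [mul_one] at h
      exact h
    have hρ_le : rwSpectralRadius S ≤ c := by
      rw [hρ_eq]
      calc limsup a atTop ≤ limsup g atTop :=
            limsup_le_limsup (eventually_atTop.mpr ⟨1, h_ev⟩) hcobdd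
              (hg_tendsto.isBoundedUnder_le)
        _ = c := hg_tendsto.limsup_eq
    -- conclude
    have hfinal : c ^ (2*n) = D := by
      rw [hc_def, ← Real.rpow_natCast (D ^ ((2 * (n:ℝ))⁻¹)) (2*n), ← Real.rpow_mul hD_pos.le]
      have hnz : (2 * (n:ℝ)) ≠ 0 := by
        have : (0:ℝ) < (n:ℝ) := by exact_mod_cast lt_of_lt_of_le one_pos hn
        positivity
      have : (2 * (n:ℝ))⁻¹ * ((2*n : ℕ) : ℝ) = 1 := by
        push_cast
        field_simp
      rw [this, Real.rpow_one]
    calc rwSpectralRadius S ^ (2*n) ≤ c ^ (2*n) := pow_le_pow_left₀ hρ_nonneg hρ_le _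
      _ = D := hfinal
      _ = P.eval (n:ℝ) ^ 2 * retProb S (2*n) := by rw [hD_def]
end

section
/- For d ≥ 3, the series ∑_{n≥0} (C(2n,n)/4^n)^d converges (so the simple random walk on ℤ^d with the cubical generating set {±1}^d is transient, with finite expected number of returns θ = ∑_{n≥0} (C(2n,n)/4^n)^d). -/
lemma centralBinom_sq_mul_le (n : ℕ) :
    (Nat.centralBinom n) ^ 2 * (2 * n + 1) ≤ 16 ^ n := by
  induction n with
  | zero => simp [Nat.centralBinom]
  | succ n ih =>
    have h := Nat.succ_mul_centralBinom_succ n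
    have hpos : 0 < (n + 1) ^ 2 := by positivity
    refine Nat.le_of_mul_le_mul_left ?_ hpos
    have h2 : (n + 1) ^ 2 * ((Nat.centralBinom (n + 1)) ^ 2 * (2 * (n + 1) + 1))
        = (2 * (2 * n + 1) * Nat.centralBinom n) ^ 2 * (2 * n + 3) := by
      rw [← h]; ring
    rw [h2]
    have key : (2 * (2 * n + 1) * Nat.centralBinom n) ^ 2 * (2 * n + 3)
        ≤ (4 * (2 * n + 1) * (2 * n + 3)) * ((Nat.centralBinom n) ^ 2 * (2 * n + 1)) := by
      ring_nf; omega
    calc (2 * (2 * n + 1) * Nat.centralBinom n) ^ 2 * (2 * n + 3)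
        ≤ (4 * (2 * n + 1) * (2 * n + 3)) * ((Nat.centralBinom n) ^ 2 * (2 * n + 1)) := key
      _ ≤ (4 * (2 * n + 1) * (2 * n + 3)) * 16 ^ n := by
          exact Nat.mul_le_mul_left _ ih
      _ ≤ ((n + 1) ^ 2 * 16) * 16 ^ n := by
          have : 4 * (2 * n + 1) * (2 * n + 3) ≤ (n + 1) ^ 2 * 16 := by nlinarith
          exact Nat.mul_le_mul_right _ this
      _ = (n + 1) ^ 2 * 16 ^ (n + 1) := by ring

lemma term_sq_le (n : ℕ) :
    (((2 * n).choose n : ℝ) / 4 ^ n) ^ 2 ≤ 1 / (2 * n + 1) := by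
  have h := centralBinom_sq_mul_le n
  have h' : ((Nat.centralBinom n : ℝ)) ^ 2 * (2 * n + 1) ≤ 16 ^ n := by
    exact_mod_cast h
  rw [div_pow, div_le_div_iff₀ (by positivity) (by positivity)]
  have : ((4 : ℝ) ^ n) ^ 2 = 16 ^ n := by
    rw [← pow_mul, pow_mul']; norm_num
  rw [Nat.centralBinom] at h'
  nlinarith [this]

/-- For `d ≥ 3` the series `∑ (C(2n,n)/4^n)^d` converges: the cubical random walk on
`ℤ^d` is transient with finite expected number of returns. -/
theorem cube_walk_transient (d : ℕ) (hd : 3 ≤ d) :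
    Summable (fun n : ℕ => (((2 * n).choose n : ℝ) / 4 ^ n) ^ d) := by
  have hg : Summable (fun n : ℕ => ((n : ℝ) + 1) ^ (-(3/2) : ℝ)) := by
    have : Summable (fun n : ℕ => ((n : ℝ)) ^ (-(3/2) : ℝ)) :=
      Real.summable_nat_rpow.mpr (by norm_num)
    have := (summable_nat_add_iff (f := fun n : ℕ => ((n : ℝ)) ^ (-(3/2) : ℝ)) 1).mpr this
    simpa using this
  refine Summable.of_nonneg_of_le (fun n => by positivity) (fun n => ?_) hg
  set t : ℝ := ((2 * n).choose n : ℝ) / 4 ^ n with ht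
  have ht0 : 0 ≤ t := by positivity
  have ht2 : t ^ 2 ≤ 1 / (2 * n + 1) := term_sq_le n
  have hle1 : (1:ℝ) / (2 * n + 1) ≤ 1 := by
    rw [div_le_one (by positivity)]; push_cast; linarith
  have ht1 : t ≤ 1 := by nlinarith [ht2, hle1]
  have h3 : t ^ d ≤ t ^ 3 := pow_le_pow_of_le_one ht0 ht1 hd
  have hsq : t ≤ ((n : ℝ) + 1) ^ (-(1/2) : ℝ) := by
    have h1 : t ^ 2 ≤ (((n : ℝ) + 1) ^ (-(1/2) : ℝ)) ^ 2 := by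
      rw [← Real.rpow_natCast (((n : ℝ) + 1) ^ (-(1/2) : ℝ)) 2, ← Real.rpow_mul (by positivity)]
      norm_num
      calc t ^ 2 ≤ 1 / (2 * n + 1) := ht2
        _ ≤ ((n : ℝ) + 1) ^ (-(1:ℝ)) := by
            rw [Real.rpow_neg_one, one_div]
            apply inv_anti₀ (by positivity)
            push_cast; linarith
    exact (pow_le_pow_iff_left₀ ht0 (by positivity) two_ne_zero).mp h1
  calc t ^ d ≤ t ^ 3 := h3
    _ ≤ (((n : ℝ) + 1) ^ (-(1/2) : ℝ)) ^ 3 := pow_le_pow_left₀ ht0 hsq 3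
    _ = ((n : ℝ) + 1) ^ (-(3/2) : ℝ) := by
        rw [← Real.rpow_natCast (((n : ℝ) + 1) ^ (-(1/2) : ℝ)) 3, ← Real.rpow_mul (by positivity)]
        norm_num
end
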